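/- Let A ⊆ [0,1] be a finite set closed under the involution a ↦ 1 − a, and for each a ∈ A and each χ = (χ₁,χ₂,χ₃) ∈ {0,1}³ let b_{a,χ} : ℝ × ℂ → ℂ. For τ ∈ ℝ and finitely supported v, w : ℤ^d → ℂ set u^{(0)} := v, u^{(1)} := w and let R_τ(v,w) denote the relation: for every k ∈ ℤ^d, w_k = e^{−iτ|k|²} v_k + e^{−iτ|k|²} Σ_{−k₁+k₂+k₃=k} Σ_{a∈A} Σ_{χ∈{0,1}³} b_{a,χ}(τ, 2iτ|k₁|²) · e^{2 i a τ (k₂·k₃ − k₁·k₂ − k₁·k₃)} · e^{−iχ₁τ|k₁|²} conj(u^{(χ₁)}_{k₁}) · e^{iχ₂τ|k₂|²} u^{(χ₂)}_{k₂} · e^{iχ₃τ|k₃|²} u^{(χ₃)}_{k₃}. If the coefficients satisfy −exp(z) · b_{a,χ}(−τ, −z) = b_{1−a, 1−χ}(τ, z) for all a ∈ A, all χ ∈ {0,1}³, all τ ∈ ℝ and all z ∈ ℂ (where 1−χ := (1−χ₁, 1−χ₂, 1−χ₃)), then R is symmetric: for all τ ∈ ℝ and all finitely supported v, w, R_τ(v,w)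 holds if and only if R_{−τ}(w,v) holds. -/

import Mathlib

/-- `|k|² = k·k` for a frequency `k ∈ ℤ^d`, as a complex number. -/
noncomputable def nsq {d : ℕ} (k : Fin d → ℤ) : ℂ := ∑ i, ((k i : ℂ)) ^ 2

/-- Dot product `k·m` of two frequencies in `ℤ^d`, as a complex number. -/
noncomputable def dotC {d : ℕ} (k m : Fin d → ℤ) : ℂ := ∑ i, (k i : ℂ) * (m i : ℂ)

/-- One step of the general forest-formula parametrisation of resonance-based schemes
for the cubic NLS equation on `𝕋^d`, in Fourier coordinates, with interpolation nodes
`a ∈ A` and coefficients `b a χ τ z` (the leaf index `χ : Fin 3 → Bool` records whether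
each leaf is evaluated at the left endpoint `u⁰ = v` or the right endpoint `u¹ = w`):
`forestR A b τ v w` holds iff for every `k ∈ ℤ^d`,
`w_k = e^{-iτ|k|²} v_k + e^{-iτ|k|²} Σ_{-k₁+k₂+k₃=k} Σ_{a∈A} Σ_{χ} b_{a,χ}(τ, 2iτ|k₁|²)
   e^{2iaτ(k₂·k₃ - k₁·k₂ - k₁·k₃)} e^{-iχ₁τ|k₁|²} conj(u^{(χ₁)}_{k₁})
   e^{iχ₂τ|k₂|²} u^{(χ₂)}_{k₂} e^{iχ₃τ|k₃|²} u^{(χ₃)}_{k₃}`,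
where the convolution constraint `-k₁+k₂+k₃ = k` has been solved as `k₃ = k + k₁ - k₂`. -/
noncomputable def forestR {d : ℕ} (A : Finset ℝ)
    (b : ℝ → (Fin 3 → Bool) → ℝ → ℂ → ℂ)
    (τ : ℝ) (v w : (Fin d → ℤ) →₀ ℂ) : Prop :=
  ∀ k : Fin d → ℤ,
    w k = Complex.exp (-(Complex.I * (τ : ℂ) * nsq k)) * v k
      + Complex.exp (-(Complex.I * (τ : ℂ) * nsq k)) *
          (∑ᶠ k₁ : Fin d → ℤ, ∑ᶠ k₂ : Fin d → ℤ,
            ∑ a ∈ A, ∑ χ : Fin 3 → Bool,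
              b a χ τ (2 * Complex.I * (τ : ℂ) * nsq k₁) *
                Complex.exp (2 * Complex.I * (a : ℂ) * (τ : ℂ) *
                  (dotC k₂ (k + k₁ - k₂) - dotC k₁ k₂ - dotC k₁ (k + k₁ - k₂))) *
                (Complex.exp (-((if χ 0 then (1 : ℂ) else 0) * Complex.I * (τ : ℂ) * nsq k₁)) *
                    (starRingEnd ℂ) ((if χ 0 then w else v) k₁)) *
                (Complex.exp ((if χ 1 then (1 : ℂ) else 0) * Complex.I * (τ : ℂ) * nsq k₂) *
                    (if χ 1 then w else v) k₂) *
                (Complex.exp ((if χ 2 then (1 : ℂ) else 0) * Complex.I * (τ : ℂ) *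
                      nsq (k + k₁ - k₂)) *
                    (if χ 2 then w else v) (k + k₁ - k₂)))

/-!
The summand of the cubic term at `(-τ, w, v, a, χ)` is `-e^{-iτ|k|²}` times the summand at
`(τ, v, w, 1 - a, 1 - χ)`: the coefficient condition turns `b_{1-a,1-χ}(τ, z)` into
`-e^{z} b_{a,χ}(-τ, -z)` with `z = 2iτ|k₁|²`, and the remaining phases add up to `-iτ|k|²` by
the resonance identity `|k|² = |k₁|² + |k₂|² + |k₃|² + 2(k₂·k₃ - k₁·k₂ - k₁·k₃)`, valid for
`-k₁ + k₂ + k₃ = k`. As `A` and `{0,1}³` are invariant under `(a, χ) ↦ (1 - a, 1 - χ)`, the cubic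
term satisfies `S_{-τ}(w, v)_k = -e^{-iτ|k|²} S_τ(v, w)_k`, and the scheme equation
`w_k = e^{-iτ|k|²} (v_k + S_τ(v, w)_k)` becomes `v_k = e^{iτ|k|²} (w_k + S_{-τ}(w, v)_k)`.
-/

open Complex

section

variable {d : ℕ}

/-- Half the lower resonance part, with `k₃ = k + k₁ - k₂`. -/
noncomputable def lowerResonance (k k₁ k₂ : Fin d → ℤ) : ℂ :=
  dotC k₂ (k + k₁ - k₂) - dotC k₁ k₂ - dotC k₁ (k + k₁ - k₂)

lemma nsq_eq_add_lowerResonance (k k₁ k₂ : Fin d → ℤ) :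
    nsq k = nsq k₁ + nsq k₂ + nsq (k + k₁ - k₂) + 2 * lowerResonance k k₁ k₂ := by
  simp only [lowerResonance, nsq, dotC, Finset.mul_sum, ← Finset.sum_add_distrib,
    ← Finset.sum_sub_distrib]
  refine Finset.sum_congr rfl fun i _ => ?_
  simp only [Pi.add_apply, Pi.sub_apply]
  push_cast
  ring

lemma ite_bnot {α : Sort*} (t : Bool) (x y : α) : (if !t then x else y) = if t then y else x := by
  cases t <;> rfl

lemma ite_bnot_one_zero {R : Type*} [Ring R] (t : Bool) :
    (if !t then (1 : R) else 0) = 1 - if t then 1 else 0 := by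
  cases t <;> simp

lemma Finset.sum_sum_one_sub_not {M ι : Type*} [AddCommMonoid M] [Fintype ι] [DecidableEq ι]
    {A : Finset ℝ} (hA : ∀ a ∈ A, 1 - a ∈ A) (f : ℝ → (ι → Bool) → M) :
    ∑ a ∈ A, ∑ χ : ι → Bool, f (1 - a) (fun j => !χ j) = ∑ a ∈ A, ∑ χ, f a χ := by
  refine Finset.sum_nbij' (1 - ·) (1 - ·) hA hA (fun a _ => sub_sub_cancel 1 a)
    (fun a _ => sub_sub_cancel 1 a) fun a _ => ?_
  have hnot : Function.Involutive fun (χ : ι → Bool) j => !χ j :=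
    fun χ => funext fun j => Bool.not_not (χ j)
  exact Fintype.sum_bijective _ hnot.bijective _ _ fun χ => rfl

noncomputable def forestTerm (b : ℝ → (Fin 3 → Bool) → ℝ → ℂ → ℂ) (τ : ℝ)
    (v w : (Fin d → ℤ) →₀ ℂ) (k k₁ k₂ : Fin d → ℤ) (a : ℝ) (χ : Fin 3 → Bool) : ℂ :=
  b a χ τ (2 * I * τ * nsq k₁) * exp (2 * I * a * τ * lowerResonance k k₁ k₂) *
    (exp (-((if χ 0 then (1 : ℂ) else 0) * I * τ * nsq k₁)) *
      starRingEnd ℂ ((if χ 0 then w else v) k₁)) *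
    (exp ((if χ 1 then (1 : ℂ) else 0) * I * τ * nsq k₂) * (if χ 1 then w else v) k₂) *
    (exp ((if χ 2 then (1 : ℂ) else 0) * I * τ * nsq (k + k₁ - k₂)) *
      (if χ 2 then w else v) (k + k₁ - k₂))

noncomputable def forestSum (A : Finset ℝ) (b : ℝ → (Fin 3 → Bool) → ℝ → ℂ → ℂ)
    (τ : ℝ) (v w : (Fin d → ℤ) →₀ ℂ) (k : Fin d → ℤ) : ℂ :=
  ∑ᶠ k₁ : Fin d → ℤ, ∑ᶠ k₂ : Fin d → ℤ, ∑ a ∈ A, ∑ χ : Fin 3 → Bool,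
    forestTerm b τ v w k k₁ k₂ a χ

lemma forestR_iff (A : Finset ℝ) (b : ℝ → (Fin 3 → Bool) → ℝ → ℂ → ℂ) (τ : ℝ)
    (v w : (Fin d → ℤ) →₀ ℂ) :
    forestR A b τ v w ↔
      ∀ k, w k = exp (-(I * τ * nsq k)) * v k + exp (-(I * τ * nsq k)) * forestSum A b τ v w k :=
  Iff.rfl

noncomputable def forestPhase (τ : ℝ) (k k₁ k₂ : Fin d → ℤ) (a : ℝ)
    (χ : Fin 3 → Bool) : ℂ :=
  2 * I * a * τ * lowerResonance k k₁ k₂ - (if χ 0 then (1 : ℂ) else 0) * I * τ * nsq k₁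
    + (if χ 1 then (1 : ℂ) else 0) * I * τ * nsq k₂
    + (if χ 2 then (1 : ℂ) else 0) * I * τ * nsq (k + k₁ - k₂)

lemma forestTerm_eq_exp_forestPhase (b : ℝ → (Fin 3 → Bool) → ℝ → ℂ → ℂ) (τ : ℝ)
    (v w : (Fin d → ℤ) →₀ ℂ) (k k₁ k₂ : Fin d → ℤ) (a : ℝ) (χ : Fin 3 → Bool) :
    forestTerm b τ v w k k₁ k₂ a χ =
      b a χ τ (2 * I * τ * nsq k₁) * exp (forestPhase τ k k₁ k₂ a χ) *
        (starRingEnd ℂ ((if χ 0 then w else v) k₁) * (if χ 1 then w else v) k₂ *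
          (if χ 2 then w else v) (k + k₁ - k₂)) := by
  simp only [forestTerm, forestPhase, sub_eq_add_neg, exp_add]
  ring

lemma forestPhase_neg (τ : ℝ) (k k₁ k₂ : Fin d → ℤ) (a : ℝ) (χ : Fin 3 → Bool) :
    forestPhase (-τ) k k₁ k₂ a χ =
      -(I * τ * nsq k) + 2 * I * τ * nsq k₁ + forestPhase τ k k₁ k₂ (1 - a) (fun j => !χ j) := by
  simp only [forestPhase, ite_bnot_one_zero]
  push_cast
  linear_combination (I * τ) * nsq_eq_add_lowerResonance k k₁ k₂

lemma forestTerm_neg_swap (b : ℝ → (Fin 3 → Bool) → ℝ → ℂ → ℂ) (τ : ℝ)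
    (v w : (Fin d → ℤ) →₀ ℂ) (k k₁ k₂ : Fin d → ℤ) (a : ℝ) (χ : Fin 3 → Bool)
    (hb : ∀ z, -exp z * b a χ (-τ) (-z) = b (1 - a) (fun j => !χ j) τ z) :
    forestTerm b (-τ) w v k k₁ k₂ a χ =
      -exp (-(I * τ * nsq k)) * forestTerm b τ v w k k₁ k₂ (1 - a) (fun j => !χ j) := by
  rw [forestTerm_eq_exp_forestPhase, forestTerm_eq_exp_forestPhase, ← hb, forestPhase_neg,
    show 2 * I * ((-τ : ℝ) : ℂ) * nsq k₁ = -(2 * I * τ * nsq k₁) by push_cast; ring]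
  simp only [ite_bnot, exp_add]
  ring

lemma forestSum_neg_swap (A : Finset ℝ) (hA : ∀ a ∈ A, 1 - a ∈ A)
    (b : ℝ → (Fin 3 → Bool) → ℝ → ℂ → ℂ)
    (hb : ∀ a ∈ A, ∀ (χ : Fin 3 → Bool) (τ : ℝ) (z : ℂ),
      -(exp z) * b a χ (-τ) (-z) = b (1 - a) (fun j => !χ j) τ z)
    (τ : ℝ) (v w : (Fin d → ℤ) →₀ ℂ) (k : Fin d → ℤ) :
    forestSum A b (-τ) w v k = -exp (-(I * τ * nsq k)) * forestSum A b τ v w k := by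
  simp only [forestSum, mul_finsum, Finset.mul_sum]
  refine finsum_congr fun k₁ => finsum_congr fun k₂ => ?_
  refine .trans ?_ (Finset.sum_sum_one_sub_not hA _)
  exact Finset.sum_congr rfl fun a ha => Finset.sum_congr rfl fun χ _ =>
    forestTerm_neg_swap b τ v w k k₁ k₂ a χ (hb a ha χ τ)

lemma forestR.neg_swap {A : Finset ℝ} (hA : ∀ a ∈ A, 1 - a ∈ A)
    {b : ℝ → (Fin 3 → Bool) → ℝ → ℂ → ℂ}
    (hb : ∀ a ∈ A, ∀ (χ : Fin 3 → Bool) (τ : ℝ) (z : ℂ),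
      -(exp z) * b a χ (-τ) (-z) = b (1 - a) (fun j => !χ j) τ z)
    {τ : ℝ} {v w : (Fin d → ℤ) →₀ ℂ} (h : forestR A b τ v w) : forestR A b (-τ) w v := by
  rw [forestR_iff] at h ⊢
  intro k
  have hexp : exp (-(I * ((-τ : ℝ) : ℂ) * nsq k)) * exp (-(I * τ * nsq k)) = 1 := by
    rw [← exp_add, ← exp_zero]
    push_cast
    ring_nf
  rw [forestSum_neg_swap A hA b hb, h k]
  linear_combination (-v k) * hexp

end

theorem forestR_symmetric_general {d : ℕ} (A : Finset ℝ)
    (hAinv : ∀ a ∈ A, 1 - a ∈ A)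
    (b : ℝ → (Fin 3 → Bool) → ℝ → ℂ → ℂ)
    (hb : ∀ a ∈ A, ∀ (χ : Fin 3 → Bool) (τ : ℝ) (z : ℂ),
      -(Complex.exp z) * b a χ (-τ) (-z) = b (1 - a) (fun j => !χ j) τ z) :
    ∀ (τ : ℝ) (v w : (Fin d → ℤ) →₀ ℂ),
      forestR A b τ v w ↔ forestR A b (-τ) w v := by
  intro τ v w
  refine ⟨forestR.neg_swap hAinv hb, fun h => ?_⟩
  simpa only [neg_neg] using forestR.neg_swap hAinv hb h

/-- If the finite set `A ⊆ [0,1]` of interpolation nodes is closed under `a ↦ 1 - a`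
and the coefficients satisfy `-exp(z) · b_{a,χ}(-τ,-z) = b_{1-a,1-χ}(τ,z)`, then the
general forest-formula scheme is symmetric: `R_τ(v,w)` holds iff `R_{-τ}(w,v)` holds. -/
theorem forestR_symmetric {d : ℕ} (A : Finset ℝ)
    (hA01 : ∀ a ∈ A, a ∈ Set.Icc (0 : ℝ) 1)
    (hAinv : ∀ a ∈ A, 1 - a ∈ A)
    (b : ℝ → (Fin 3 → Bool) → ℝ → ℂ → ℂ)
    (hb : ∀ a ∈ A, ∀ (χ : Fin 3 → Bool) (τ : ℝ) (z : ℂ),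
      -(Complex.exp z) * b a χ (-τ) (-z) = b (1 - a) (fun j => !χ j) τ z) :
    ∀ (τ : ℝ) (v w : (Fin d → ℤ) →₀ ℂ),
      forestR A b τ v w ↔ forestR A b (-τ) w v :=
  forestR_symmetric_general A hAinv b hb
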